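/- Let 𝔽_q be a finite field, F = 𝔽_q(T), N a finite Galois extension of F, and K, L intermediate fields of N/F whose fixing subgroups H_K = Gal(N/K) and H_L = Gal(N/L) are Gassmann equivalent in G = Gal(N/F). Then K and L have the same field of constants; precisely, the set {x ∈ N : x ∈ K and x is algebraic over 𝔽_q} equals the set {x ∈ N : x ∈ L and x is algebraic over 𝔽_q}. -/

import Mathlib

/-- Two subgroups `H` and `H'` of a group `G` are Gassmann equivalent if every
`g : G` is conjugate to the same number of elements of `H` as of `H'`. -/
def IsGassmannEquiv {G : Type*} [Group G] (H H' : Subgroup G) : Prop :=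
  ∀ g : G, Nat.card {h : H // IsConj g (h : G)} = Nat.card {h : H' // IsConj g (h : G)}

/-!
An element `x` algebraic over the finite field `𝔽_q` generates a finite, hence normal, extension
`𝔽_q(x)`, so every automorphism of `N` maps `x` into `𝔽_q(x) ⊆ K` when `x ∈ K`. Hence every
conjugate of an element of `H_K` still fixes `x`. Gassmann equivalence makes every element of
`H_L` such a conjugate, so `x` lies in the fixed field of `H_L`, which is `L`.
-/

open IntermediateField

namespace IsGassmannEquiv

variable {G : Type*} [Group G] {H H' : Subgroup G}

theorem symm (h : IsGassmannEquiv H H') : IsGassmannEquiv H' H := fun g => (h g).symm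

theorem exists_isConj [Finite G] (h : IsGassmannEquiv H H') {g : G} (hg : g ∈ H') :
    ∃ σ ∈ H, IsConj g σ := by
  have : Nonempty {σ : H' // IsConj g (σ : G)} := ⟨⟨⟨g, hg⟩, .refl g⟩⟩
  have hpos : 0 < Nat.card {σ : H // IsConj g (σ : G)} := by rw [h g]; exact Nat.card_pos
  obtain ⟨⟨⟨σ, hσ⟩, hconj⟩⟩ := (Nat.card_pos_iff.mp hpos).1
  exact ⟨σ, hσ, hconj⟩

end IsGassmannEquiv

namespace IntermediateField

theorem algHom_apply_mem_adjoin_simple_of_finite {k N : Type*} [Field k] [Finite k] [Field N]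
    [Algebra k N] {x : N} (hx : IsAlgebraic k x) (φ : N →ₐ[k] N) : φ x ∈ k⟮x⟯ := by
  have : FiniteDimensional k k⟮x⟯ := adjoin.finiteDimensional hx.isIntegral
  have : Finite k⟮x⟯ := Module.finite_of_finite k
  rw [← AlgHom.fieldRange_of_normal (φ.comp k⟮x⟯.val)]
  exact ⟨⟨x, mem_adjoin_simple_self k x⟩, rfl⟩

variable {k F N : Type*} [Field k] [Finite k] [Field F] [Field N] [Algebra k F] [Algebra F N]
  [Algebra k N] [IsScalarTower k F N]

theorem algEquiv_apply_mem_of_isAlgebraic {K : IntermediateField F N} {x : N} (hxK : x ∈ K)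
    (hx : IsAlgebraic k x) (g : N ≃ₐ[F] N) : g x ∈ K := by
  have hle : k⟮x⟯ ≤ K.restrictScalars k := adjoin_simple_le_iff.mpr hxK
  exact hle (algHom_apply_mem_adjoin_simple_of_finite hx ((g : N →ₐ[F] N).restrictScalars k))

theorem mem_of_isGassmannEquiv_of_isAlgebraic [FiniteDimensional F N] [IsGalois F N]
    {K L : IntermediateField F N} (hKL : IsGassmannEquiv K.fixingSubgroup L.fixingSubgroup)
    {x : N} (hxK : x ∈ K) (hx : IsAlgebraic k x) : x ∈ L := by
  rw [← IsGalois.fixedField_fixingSubgroup L]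
  rintro ⟨τ, hτ⟩
  obtain ⟨σ, hσ, hconj⟩ := hKL.exists_isConj hτ
  obtain ⟨c, rfl⟩ := isConj_iff.mp hconj.symm
  have hσ_fix : σ (c⁻¹ x) = c⁻¹ x :=
    (mem_fixingSubgroup_iff K σ).mp hσ _ (algEquiv_apply_mem_of_isAlgebraic hxK hx c⁻¹)
  change c (σ (c⁻¹ x)) = x
  rw [hσ_fix]
  exact c.apply_symm_apply x

end IntermediateField

set_option synthInstance.maxHeartbeats 1000000 in
/-- Intermediate fields of a finite Galois extension of `𝔽_q(T)` with Gassmann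
equivalent fixing subgroups have the same field of constants: the elements of `K`
algebraic over `𝔽_q` coincide with the elements of `L` algebraic over `𝔽_q`. -/
theorem constants_eq_of_gassmann_equiv
    (Fq : Type) [Field Fq] [Fintype Fq]
    (N : Type) [Field N] [Algebra (RatFunc Fq) N] [FiniteDimensional (RatFunc Fq) N]
    [IsGalois (RatFunc Fq) N]
    (K L : IntermediateField (RatFunc Fq) N)
    (hGassmann : IsGassmannEquiv K.fixingSubgroup L.fixingSubgroup) :
    letI : Algebra Fq N :=
      ((algebraMap (RatFunc Fq) N).comp (algebraMap Fq (RatFunc Fq))).toAlgebra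
    {x : N | x ∈ K ∧ IsAlgebraic Fq x} = {x : N | x ∈ L ∧ IsAlgebraic Fq x} := by
  let : Algebra Fq N :=
    ((algebraMap (RatFunc Fq) N).comp (algebraMap Fq (RatFunc Fq))).toAlgebra
  have : IsScalarTower Fq (RatFunc Fq) N := IsScalarTower.of_algebraMap_eq fun _ => rfl
  ext x
  exact ⟨fun ⟨hxK, hx⟩ => ⟨mem_of_isGassmannEquiv_of_isAlgebraic hGassmann hxK hx, hx⟩,
    fun ⟨hxL, hx⟩ => ⟨mem_of_isGassmannEquiv_of_isAlgebraic hGassmann.symm hxL hx, hx⟩⟩
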